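/- arXiv:2406.06543 — 2 statements merged into one kernel-verified Lean document; each statement's English description precedes it below -/
import Mathlib

section
/- (Theorem 1, part 2: SSF dominates IF.) For the discrete-time IF neuron with subtractive reset, the total spike count over the window is bounded by the SSF output count: N_IF T ≤ N_SSF, where N_SSF = min(T, ⌊U/θ⌋) and U = S T is the total integrated input. -/
/-- Membrane potential of the discrete-time IF neuron with subtractive reset:
`ifV θ x 0 = 0`, and at step `t+1` we let `W = V t + x (t+1)`; if `W ≥ θ`
the neuron spikes and `V (t+1) = W - θ`, otherwise `V (t+1) = W`. -/
noncomputable def ifV (θ : ℝ) (x : ℕ → ℝ) : ℕ → ℝ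
  | 0 => 0
  | t + 1 =>
      let W := ifV θ x t + x (t + 1)
      if θ ≤ W then W - θ else W

/-- Spike indicator `σ t` of the IF neuron at step `t ≥ 1`. -/
noncomputable def ifSpike (θ : ℝ) (x : ℕ → ℝ) (t : ℕ) : ℕ :=
  if θ ≤ ifV θ x (t - 1) + x t then 1 else 0

/-- Number of spikes `N_IF t = ∑_{τ ≤ t} σ τ` emitted up to step `t`. -/
noncomputable def nIF (θ : ℝ) (x : ℕ → ℝ) (t : ℕ) : ℕ :=
  ∑ τ ∈ Finset.Icc 1 t, ifSpike θ x τ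

/-- Cumulative input `S t = ∑_{τ ≤ t} x τ`. -/
noncomputable def Scum (x : ℕ → ℝ) (t : ℕ) : ℝ :=
  ∑ τ ∈ Finset.Icc 1 t, x τ

lemma key (θ : ℝ) (hθ : 0 < θ) (x : ℕ → ℝ) (T : ℕ)
    (hx : ∀ t, 1 ≤ t → t ≤ T → 0 ≤ x t) :
    ∀ t, t ≤ T → ifV θ x t = Scum x t - θ * nIF θ x t ∧ 0 ≤ ifV θ x t := by
  intro t
  induction t with
  | zero => intro _; simp [ifV, Scum, nIF]
  | succ n ih =>
    intro hn
    obtain ⟨heq, hpos⟩ := ih (Nat.le_of_succ_le hn)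
    have hxn : 0 ≤ x (n + 1) := hx _ (Nat.succ_le_succ (Nat.zero_le n)) hn
    have hS : Scum x (n+1) = Scum x n + x (n+1) := by
      simp [Scum, Finset.sum_Icc_succ_top (Nat.succ_le_succ (Nat.zero_le n))]
    have hN : nIF θ x (n+1) = nIF θ x n + ifSpike θ x (n+1) := by
      simp [nIF, Finset.sum_Icc_succ_top (Nat.succ_le_succ (Nat.zero_le n))]
    have hsp : ifSpike θ x (n+1) = if θ ≤ ifV θ x n + x (n+1) then 1 else 0 := by
      simp [ifSpike]
    rw [ifV]
    show (if θ ≤ ifV θ x n + x (n+1) then ifV θ x n + x (n+1) - θ else ifV θ x n + x (n+1)) = _ ∧ _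
    by_cases h : θ ≤ ifV θ x n + x (n+1)
    · rw [if_pos h]
      constructor
      · rw [hS, hN, hsp, if_pos h, heq]; push_cast; ring
      · linarith
    · rw [if_neg h]
      constructor
      · rw [hS, hN, hsp, if_neg h, heq]; push_cast; ring
      · linarith

/-- Theorem 1, part 2: SSF dominates IF:
`N_IF T ≤ N_SSF = min(T, ⌊U/θ⌋)` where `U = S T`. -/
theorem if_count_le_ssf (T : ℕ) (hT : 1 ≤ T) (θ : ℝ) (hθ : 0 < θ)
    (x : ℕ → ℝ) (hx : ∀ t, 1 ≤ t → t ≤ T → 0 ≤ x t) :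
    (nIF θ x T : ℤ) ≤ min (T : ℤ) ⌊Scum x T / θ⌋ := by
  obtain ⟨heq, hpos⟩ := key θ hθ x T hx T le_rfl
  have h1 : (nIF θ x T : ℤ) ≤ T := by
    have : nIF θ x T ≤ T := by
      calc nIF θ x T ≤ ∑ τ ∈ Finset.Icc 1 T, 1 := by
            apply Finset.sum_le_sum
            intro i _
            simp [ifSpike]; split <;> simp
        _ = T := by simp
    exact_mod_cast this
  have h2 : (nIF θ x T : ℤ) ≤ ⌊Scum x T / θ⌋ := by
    rw [Int.le_floor]
    rw [le_div_iff₀ hθ]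
    push_cast
    linarith
  exact le_min h1 h2
end

section
/- (Strict undercount under overflow.) For the discrete-time IF neuron with subtractive reset, if the residual membrane potential satisfies V T ≥ θ and N_IF T < T, then the IF spike count is strictly smaller than the SSF output count: N_IF T < N_SSF, where N_SSF = min(T, ⌊U/θ⌋) and U = S T. -/
lemma ifV_conservation (θ : ℝ) (x : ℕ → ℝ) (t : ℕ) :
    ifV θ x t = Scum x t - θ * nIF θ x t := by
  induction t with
  | zero => simp [ifV, Scum, nIF]
  | succ t ih =>
      have h1 : (1 : ℕ) ≤ t + 1 := Nat.le_add_left 1 t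
      have hS : Scum x (t + 1) = Scum x t + x (t + 1) := by
        rw [Scum, Scum, Finset.sum_Icc_succ_top h1]
      have hNn : ((nIF θ x (t + 1) : ℝ)) = nIF θ x t + ifSpike θ x (t + 1) := by
        rw [nIF, nIF, Finset.sum_Icc_succ_top h1]; push_cast; ring
      rw [ifV, hS, hNn]
      simp only [ifSpike, Nat.add_sub_cancel]
      by_cases h : θ ≤ ifV θ x t + x (t + 1)
      · rw [if_pos h, if_pos h]; push_cast; linarith [ih]
      · rw [if_neg h, if_neg h]; push_cast; linarith [ih]

/-- Strict undercount under overflow: if `V T ≥ θ` and `N_IF T < T`,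
then `N_IF T < N_SSF = min(T, ⌊U/θ⌋)`, where `U = S T`. -/
theorem if_strict_undercount (T : ℕ) (hT : 1 ≤ T) (θ : ℝ) (hθ : 0 < θ)
    (x : ℕ → ℝ) (hx : ∀ t, 1 ≤ t → t ≤ T → 0 ≤ x t)
    (hres : θ ≤ ifV θ x T) (hlt : nIF θ x T < T) :
    (nIF θ x T : ℤ) < min (T : ℤ) ⌊Scum x T / θ⌋ := by
  have hcons := ifV_conservation θ x T
  set N := nIF θ x T with hN
  have hS : θ * (N + 1) ≤ Scum x T := by
    have : θ + θ * N ≤ Scum x T := by linarith [hres, hcons.symm]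
    linarith [this]
  have hfloor : (N : ℤ) + 1 ≤ ⌊Scum x T / θ⌋ := by
    rw [Int.le_floor]
    push_cast
    rw [le_div_iff₀ hθ]
    linarith [hS]
  refine lt_min ?_ (by omega)
  exact_mod_cast hlt
end
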